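/- In the LIiP-style modal system, the epistemic internalised disjunction property is derivable: ⊢ k → (□(φ ∨ ψ) → (□φ ∨ □ψ)). -/
import Mathlib


/-- Propositional modal formulas over atoms, with a unary modality `box`. -/
inductive Form : Type where
  | atom : Nat → Form
  | bot  : Form
  | and  : Form → Form → Form
  | or   : Form → Form → Form
  | imp  : Form → Form → Form
  | box  : Form → Form
deriving DecidableEq

/-- Intuitionistic negation. -/
def Form.neg (a : Form) : Form := a.imp .bot
/-- Biconditional. -/
def Form.iff (a b : Form) : Form := (a.imp b).and (b.imp a)

/-- A standard Hilbert system for intuitionistic propositional logic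
(box-formulas are treated as opaque). -/
inductive IPL : Form → Prop where
  | ax1 (a b : Form) : IPL (a.imp (b.imp a))
  | ax2 (a b c : Form) : IPL ((a.imp (b.imp c)).imp ((a.imp b).imp (a.imp c)))
  | andI (a b : Form) : IPL (a.imp (b.imp (a.and b)))
  | andE1 (a b : Form) : IPL ((a.and b).imp a)
  | andE2 (a b : Form) : IPL ((a.and b).imp b)
  | orI1 (a b : Form) : IPL (a.imp (a.or b))
  | orI2 (a b : Form) : IPL (b.imp (a.or b))
  | orE (a b c : Form) : IPL ((a.imp c).imp ((b.imp c).imp ((a.or b).imp c)))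
  | exfalso (a : Form) : IPL (Form.bot.imp a)
  | mp {a b : Form} : IPL (a.imp b) → IPL a → IPL b


/-- Derivability from a context, for the deduction theorem. -/
inductive Ded : List Form → Form → Prop where
  | hyp {Γ a} : a ∈ Γ → Ded Γ a
  | thm {Γ a} : IPL a → Ded Γ a
  | mp {Γ a b} : Ded Γ (Form.imp a b) → Ded Γ a → Ded Γ b

theorem IPL.id (a : Form) : IPL (a.imp a) :=
  IPL.mp (IPL.mp (IPL.ax2 a (a.imp a) a) (IPL.ax1 a (a.imp a))) (IPL.ax1 a a)

theorem Ded.deduction {Γ : List Form} {a b : Form}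
    (h : Ded (a :: Γ) b) : Ded Γ (a.imp b) := by
  induction h with
  | hyp hmem =>
    rcases List.mem_cons.mp hmem with h | h
    · subst h; exact Ded.thm (IPL.id _)
    · exact Ded.mp (Ded.thm (IPL.ax1 _ a)) (Ded.hyp h)
  | thm ht => exact Ded.mp (Ded.thm (IPL.ax1 _ a)) (Ded.thm ht)
  | mp _ _ ih1 ih2 => exact Ded.mp (Ded.mp (Ded.thm (IPL.ax2 _ _ _)) ih1) ih2

theorem Ded.toIPL {a : Form} (h : Ded [] a) : IPL a := by
  generalize hΓ : ([] : List Form) = Γ at h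
  induction h with
  | hyp hmem => subst hΓ; simp at hmem
  | thm ht => exact ht
  | mp _ _ ih1 ih2 => exact IPL.mp ih1 ih2

/-- Epistemic internalised disjunction property:
`⊢ k → (□(φ ∨ ψ) → (□φ ∨ □ψ))`. -/
theorem eidp
    (Prv : Form → Prop) (k : Form)
    (hIPL : ∀ φ : Form, IPL φ → Prv φ)
    (hMP : ∀ φ ψ : Form, Prv (φ.imp ψ) → Prv φ → Prv ψ)
    (hK : ∀ φ ψ : Form, Prv (((φ.imp ψ).box).imp ((φ.box).imp ψ.box)))
    (hET : ∀ φ : Form, Prv ((φ.box).imp (k.imp φ)))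
    (hMM : ∀ φ : Form, Prv (φ.imp φ.box)) :
    ∀ φ ψ : Form, Prv (k.imp (((φ.or ψ).box).imp ((φ.box).or ψ.box))) := by
  intro φ ψ
  set A := (φ.or ψ).box with hA
  set C := (φ.box).or ψ.box with hC
  have key : IPL ((A.imp (k.imp (φ.or ψ))).imp ((φ.imp φ.box).imp
      ((ψ.imp ψ.box).imp (k.imp (A.imp C))))) := by
    apply Ded.toIPL
    apply Ded.deduction; apply Ded.deduction; apply Ded.deduction
    apply Ded.deduction; apply Ded.deduction
    -- context: [A, k, ψ→□ψ, φ→□φ, A→(k→(φ∨ψ))], goal C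
    have horpsi : Ded [A, k, ψ.imp ψ.box, φ.imp φ.box,
        A.imp (k.imp (φ.or ψ))] (φ.or ψ) := by
      exact Ded.mp (Ded.mp (Ded.hyp (a := A.imp (k.imp (φ.or ψ))) (by simp))
        (Ded.hyp (a := A) (by simp))) (Ded.hyp (a := k) (by simp))
    have hφC : Ded [A, k, ψ.imp ψ.box, φ.imp φ.box,
        A.imp (k.imp (φ.or ψ))] (φ.imp C) := by
      apply Ded.deduction
      exact Ded.mp (Ded.thm (IPL.orI1 _ _))
        (Ded.mp (Ded.hyp (a := φ.imp φ.box) (by simp)) (Ded.hyp (a := φ) (by simp)))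
    have hψC : Ded [A, k, ψ.imp ψ.box, φ.imp φ.box,
        A.imp (k.imp (φ.or ψ))] (ψ.imp C) := by
      apply Ded.deduction
      exact Ded.mp (Ded.thm (IPL.orI2 _ _))
        (Ded.mp (Ded.hyp (a := ψ.imp ψ.box) (by simp)) (Ded.hyp (a := ψ) (by simp)))
    exact Ded.mp (Ded.mp (Ded.mp (Ded.thm (IPL.orE _ _ _)) hφC) hψC) horpsi
  exact hMP _ _ (hMP _ _ (hMP _ _ (hIPL _ key) (hET (φ.or ψ))) (hMM φ)) (hMM ψ)
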